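/- arXiv:1811.11120 — 2 statements merged into one kernel-verified Lean document; each statement's English description precedes it below -/
import Mathlib

section
/- Let Λ be a bounded lattice and A a structure in EQ_Λ. Define d : A × A → Φ(Λ) by d(x,y) = {λ ∈ Λ : E_λ(x,y)}. Then (A, d) is a Φ(Λ)-ultrametric space: d is symmetric, d(x,y) is the bottom element of Φ(Λ) (namely the filter Λ) iff x = y, and d(x,y) ≤ d(x,z) ∨ d(y,z) for all x, y, z. -/
/-- Given an `EQ_Λ` structure, define `d(x,y) = {λ : E_λ(x,y)} ∈ Φ(Λ)`. Then `(A,d)` is a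
`Φ(Λ)`-ultrametric space: `d` is symmetric, `d(x,y)` is the bottom element of `Φ(Λ)`
(the full filter `Λ`, i.e. `Set.univ`) iff `x = y`, and `d(x,y) ≤ d(x,z) ∨ d(y,z)`,
where the join of filters is their intersection and the order is reverse inclusion. -/
theorem eqStructure_gives_ultrametric {Λ : Type*} [Lattice Λ] [BoundedOrder Λ]
    {A : Type*} (E : Λ → A → A → Prop)
    (hEq : ∀ l, Equivalence (E l))
    (hMeet : ∀ l m x y, E (l ⊓ m) x y ↔ E l x y ∧ E m x y)
    (hBot : ∀ x y, E ⊥ x y ↔ x = y)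
    (hTop : ∀ x y, E ⊤ x y)
    (d : A → A → Set Λ)
    (hd : ∀ x y, d x y = {l : Λ | E l x y}) :
    (∀ x y, d x y = d y x) ∧
    (∀ x y, d x y = Set.univ ↔ x = y) ∧
    (∀ x y z, d x z ∩ d y z ⊆ d x y) := by
  refine ⟨?_, ?_, ?_⟩
  · intro x y
    simp only [hd]
    ext l
    exact ⟨fun h => (hEq l).symm h, fun h => (hEq l).symm h⟩
  · intro x y
    simp only [hd]
    constructor
    · intro h
      have : (⊥ : Λ) ∈ {l : Λ | E l x y} := h ▸ Set.mem_univ _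
      exact (hBot x y).mp this
    · rintro rfl
      exact Set.eq_univ_of_forall fun l => (hEq l).refl x
  · intro x y z
    simp only [hd]
    rintro l ⟨h1, h2⟩
    exact (hEq l).trans h1 ((hEq l).symm h2)
end

section
/- Let Λ be a bounded lattice and A a set with at least two elements. Define E_λ to be equality for all λ ≠ 1 and E_1 to be the trivial relation. Then (A, (E_λ)) is an EQ_Λ structure, and the map λ ↦ E_λ (into the lattice of equivalence relations on A) preserves meets; moreover it preserves joins if and only if 1 is join-irreducible in Λ. -/
private lemma eqvGen_eq_aux {A : Type*} {x y : A}
    (h : Relation.EqvGen (fun a b : A => a = b ∨ a = b) x y) : x = y := by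
  induction h with
  | rel a b h => exact h.elim id id
  | refl => rfl
  | symm _ _ _ ih => exact ih.symm
  | trans _ _ _ _ _ ih1 ih2 => exact ih1.trans ih2

/-- Let `Λ` be a bounded lattice (with `0 ≠ 1`) and `A` a set with at least two elements.
Define `E_λ` to be equality for `λ ≠ 1` and `E_1` to be the trivial relation. Then
`(A,(E_λ))` is an `EQ_Λ` structure and `λ ↦ E_λ` preserves meets; moreover it preserves
joins (the join of two equivalence relations being the smallest equivalence relation
containing both, i.e. the one generated by their union) iff `1` is join-irreducible. -/
theorem trivialFamily_eqStructure {Λ : Type*} [Lattice Λ] [BoundedOrder Λ]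
    (hΛ : (⊥ : Λ) ≠ ⊤)
    {A : Type*} (hA : ∃ a b : A, a ≠ b)
    (E : Λ → A → A → Prop)
    (hEne : ∀ l : Λ, l ≠ ⊤ → E l = fun x y => x = y)
    (hEtop : E ⊤ = fun _ _ => True) :
    (∀ l, Equivalence (E l)) ∧
    (∀ (l m : Λ) (x y : A), E (l ⊓ m) x y ↔ E l x y ∧ E m x y) ∧
    (∀ x y : A, E ⊥ x y ↔ x = y) ∧
    (∀ x y : A, E ⊤ x y) ∧
    ((∀ (l m : Λ) (x y : A),
        E (l ⊔ m) x y ↔ Relation.EqvGen (fun a b => E l a b ∨ E m a b) x y) ↔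
      (∀ l m : Λ, l ⊔ m = ⊤ → l = ⊤ ∨ m = ⊤)) := by
  have hrefl : ∀ (l : Λ) (x : A), E l x x := by
    intro l x
    by_cases h : l = ⊤
    · subst h; rw [hEtop]; trivial
    · rw [hEne l h]
  refine ⟨?_, ?_, ?_, ?_, ?_⟩
  · intro l
    by_cases h : l = ⊤
    · subst h; rw [hEtop]; exact ⟨fun _ => trivial, fun _ => trivial, fun _ _ => trivial⟩
    · rw [hEne l h]; exact ⟨fun _ => rfl, Eq.symm, Eq.trans⟩
  · intro l m x y
    by_cases hl : l = ⊤
    · subst hl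
      by_cases hm : m = ⊤
      · subst hm; simp [hEtop]
      · have : (⊤ : Λ) ⊓ m ≠ ⊤ := by
          simp only [top_inf_eq]; exact hm
        rw [hEne _ this, hEne m hm, hEtop]; simp
    · have : l ⊓ m ≠ ⊤ := fun h => hl (top_le_iff.mp (h ▸ inf_le_left))
      rw [hEne _ this, hEne l hl]
      constructor
      · rintro rfl; exact ⟨rfl, hrefl m x⟩
      · exact fun h => h.1
  · intro x y; rw [hEne ⊥ hΛ]
  · intro x y; rw [hEtop]; trivial
  · constructor
    · intro h l m hlm
      by_contra hc
      push_neg at hc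
      obtain ⟨hl, hm⟩ := hc
      obtain ⟨a, b, hab⟩ := hA
      have := (h l m a b).mp (by rw [hlm, hEtop]; trivial)
      rw [hEne l hl, hEne m hm] at this
      exact hab (eqvGen_eq_aux this)
    · intro h l m x y
      by_cases hlm : l ⊔ m = ⊤
      · rw [hlm, hEtop]
        simp only [true_iff]
        rcases h l m hlm with rfl | rfl
        · exact Relation.EqvGen.rel x y (Or.inl (by rw [hEtop]; trivial))
        · exact Relation.EqvGen.rel x y (Or.inr (by rw [hEtop]; trivial))
      · have hl : l ≠ ⊤ := fun h' => hlm (top_le_iff.mp (h' ▸ le_sup_left))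
        have hm : m ≠ ⊤ := fun h' => hlm (top_le_iff.mp (h' ▸ le_sup_right))
        rw [hEne _ hlm, hEne l hl, hEne m hm]
        constructor
        · rintro rfl; exact Relation.EqvGen.refl x
        · exact eqvGen_eq_aux
end
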